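/- arXiv:2605.13800 — 2 statements merged into one kernel-verified Lean document; each statement's English description precedes it below -/
import Mathlib

section
/- Let T be a minimum-cost arborescence rooted at r in G with the non-root vertices labeled v₁,…,v_{n−1}, and for each i let e_i = (p(v_i), v_i) be the edge of T entering v_i and let ρ_i be the unique shortest path in G − e_i from the component X(v_i) of r in T − e_i to v_i. Color each edge of ⋃_{i=1}^{n−1} ρ_i with the least index i of a path ρ_i containing it. Say that color i is charged to an ordered pair of distinct vertices (x,y) if ρ_i contains a subpath from x to y, some outgoing edge of x has color i, and some incoming edge of y has color i. Then every ordered pair (x,y) of distinct vertices is charged by at most three colors. -/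
/-!
Fix `x ≠ y` and a shortest `x`–`y` path `P` in `G`. For a color `i` charged to `(x, y)`, the
`x`–`y` subpath `σᵢ` of `ρᵢ` is the shortest `x`–`y` path in `G − eᵢ`, and its first and last
edges have color `i`. An edge has only one color, so at most one charged color is the color of
the first edge of `P`, and at most one that of its last edge. If `eᵢ ∉ P` then `σᵢ = P`, so the
first edge of `P` has color `i`. For distinct charged `i, j` the paths `σᵢ, σⱼ` differ (their
first edges have different colors), so by uniqueness `eᵢ ∈ σⱼ` or `eⱼ ∈ σᵢ`. If `eᵢ` precedes
`eⱼ` on `P`, then in the first case `σⱼ` agrees with `P` up to the head of `eᵢ`, and in the second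
`σᵢ` agrees with `P` from the tail of `eⱼ` on: the first edge of `P` has color `j` or its last
edge has color `i`. Hence at most one charged color is the color of neither, and at most three
colors are charged.
-/

/-- `p` is a (simple) directed path from `u` to `v` using only edges in `E`,
encoded as its list of vertices. -/
def IsDipath {V : Type*} (E : Set (V × V)) (u v : V) (p : List V) : Prop :=
  p.Nodup ∧ p.head? = some u ∧ p.getLast? = some v ∧
    p.Chain' (fun a b => (a, b) ∈ E)

/-- The list of (directed) edges of a path given by its list of vertices. -/
def pathEdges {V : Type*} (p : List V) : List (V × V) := p.zip p.tail

/-- The cost (length) of a path: the sum of the costs of its edges. -/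
def pathCost {V : Type*} (cost : V × V → ℝ) (p : List V) : ℝ :=
  ((pathEdges p).map cost).sum

/-- `p` is a shortest (minimum-cost) path from `u` to `v` in the digraph with edge set `E`. -/
def IsShortestDipath {V : Type*} (E : Set (V × V)) (cost : V × V → ℝ)
    (u v : V) (p : List V) : Prop :=
  IsDipath E u v p ∧ ∀ q, IsDipath E u v q → pathCost cost p ≤ pathCost cost q

/-- `p` is a shortest (minimum-cost) path from the vertex set `X` to the vertex `v`
in the digraph with edge set `E`. -/
def IsShortestDipathFromSet {V : Type*} (E : Set (V × V)) (cost : V × V → ℝ)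
    (X : Set V) (v : V) (p : List V) : Prop :=
  (∃ u ∈ X, IsDipath E u v p) ∧
    ∀ u ∈ X, ∀ q, IsDipath E u v q → pathCost cost p ≤ pathCost cost q

/-- `A` is an arborescence rooted at `r` in the digraph with edge set `E`. -/
def IsArborescence {V : Type*} (E : Set (V × V)) (r : V) (A : Set (V × V)) : Prop :=
  A ⊆ E ∧
  (∀ v : V, ¬ Relation.TransGen (fun a b => (a, b) ∈ A) v v) ∧
  (∀ e ∈ A, e.2 ≠ r) ∧
  (∀ v : V, v ≠ r → ∃! e : V × V, e ∈ A ∧ e.2 = v) ∧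
  (∀ v : V, Relation.ReflTransGen (fun a b => (a, b) ∈ A) r v)

/-- The cost of a set of edges: the sum of the costs of its elements. -/
noncomputable def edgeSetCost {V : Type*} (cost : V × V → ℝ) (A : Set (V × V)) : ℝ :=
  ∑ᶠ e ∈ A, cost e

/-- `A` is a minimum-cost arborescence rooted at `r` in the digraph with edge set `E`. -/
def IsMinArborescence {V : Type*} (E : Set (V × V)) (cost : V × V → ℝ)
    (r : V) (A : Set (V × V)) : Prop :=
  IsArborescence E r A ∧
    ∀ B, IsArborescence E r B → edgeSetCost cost A ≤ edgeSetCost cost B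

/-- Edge `ε` has color `i`: `i` is the least index of a path `ρ j` containing `ε`. -/
def HasColor {V : Type*} {m : ℕ} (ρ : Fin m → List V) (i : Fin m) (ε : V × V) : Prop :=
  ε ∈ pathEdges (ρ i) ∧ ∀ j : Fin m, j < i → ε ∉ pathEdges (ρ j)

/-- Color `i` is charged to the ordered pair `(x, y)`: the path `ρ i` contains a subpath
from `x` to `y` (i.e. `x` occurs strictly before `y` on `ρ i`), some outgoing edge of `x`
has color `i` and some incoming edge of `y` has color `i`. -/
def Charged {V : Type*} {m : ℕ} (ρ : Fin m → List V) (i : Fin m) (x y : V) : Prop :=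
  (∃ k l : ℕ, k < l ∧ (ρ i)[k]? = some x ∧ (ρ i)[l]? = some y) ∧
  (∃ a : V, HasColor ρ i (x, a)) ∧
  (∃ b : V, HasColor ρ i (b, y))

section
variable {V : Type*}

theorem mem_pathEdges_iff_infix {p : List V} {a b : V} :
    (a, b) ∈ pathEdges p ↔ [a, b] <:+: p := by
  induction p with
  | nil => simp [pathEdges]
  | cons c p ih =>
    cases p with
    | nil => simpa [pathEdges] using fun h : [a, b] <:+: [c] => by simpa using h.length_le
    | cons d p =>
      rw [List.infix_cons_iff, ← ih]
      simp [pathEdges]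

theorem mem_pathEdges_iff_exists_append {p : List V} {a b : V} :
    (a, b) ∈ pathEdges p ↔ ∃ l₁ l₂, p = l₁ ++ a :: b :: l₂ := by
  rw [mem_pathEdges_iff_infix]
  constructor
  · rintro ⟨l₁, l₂, rfl⟩
    exact ⟨l₁, l₂, by simp⟩
  · rintro ⟨l₁, l₂, rfl⟩
    exact ⟨l₁, l₂, by simp⟩

theorem mem_pathEdges_iff_getElem? {p : List V} {a b : V} :
    (a, b) ∈ pathEdges p ↔ ∃ k, p[k]? = some a ∧ p[k + 1]? = some b := by
  rw [mem_pathEdges_iff_exists_append]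
  constructor
  · rintro ⟨l₁, l₂, rfl⟩
    exact ⟨l₁.length, by simp, by simp⟩
  · rintro ⟨k, ha, hb⟩
    obtain ⟨hk, rfl⟩ := List.getElem?_eq_some_iff.1 ha
    obtain ⟨hk', rfl⟩ := List.getElem?_eq_some_iff.1 hb
    refine ⟨p.take k, p.drop (k + 2), ?_⟩
    rw [← List.drop_eq_getElem_cons, ← List.drop_eq_getElem_cons, List.take_append_drop]

theorem List.IsInfix.pathEdges_subset {s p : List V} (h : s <:+: p) :
    pathEdges s ⊆ pathEdges p := fun _ hε =>
  mem_pathEdges_iff_infix.2 ((mem_pathEdges_iff_infix.1 hε).trans h)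

theorem mem_of_mem_pathEdges {p : List V} {a b : V} (h : (a, b) ∈ pathEdges p) :
    a ∈ p ∧ b ∈ p :=
  have hs := (mem_pathEdges_iff_infix.1 h).subset
  ⟨hs (by simp), hs (by simp)⟩

theorem isChain_iff_forall_mem_pathEdges {R : V → V → Prop} {p : List V} :
    p.IsChain R ↔ ∀ ε ∈ pathEdges p, R ε.1 ε.2 := by
  simp only [List.isChain_iff_forall_rel_of_append_cons_cons, Prod.forall,
    mem_pathEdges_iff_exists_append]
  grind

theorem List.Nodup.snd_eq_of_mem_pathEdges {p : List V} (hp : p.Nodup) {a b c : V}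
    (hb : (a, b) ∈ pathEdges p) (hc : (a, c) ∈ pathEdges p) : b = c := by
  obtain ⟨k, hk, hb⟩ := mem_pathEdges_iff_getElem?.1 hb
  obtain ⟨l, hl, hc⟩ := mem_pathEdges_iff_getElem?.1 hc
  obtain rfl : k = l :=
    (List.getElem?_inj (List.getElem?_eq_some_iff.1 hk).1 hp).1 (hk.trans hl.symm)
  exact Option.some_inj.1 (hb.symm.trans hc)

theorem List.Nodup.fst_eq_of_mem_pathEdges {p : List V} (hp : p.Nodup) {a b c : V}
    (ha : (a, c) ∈ pathEdges p) (hb : (b, c) ∈ pathEdges p) : a = b := by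
  obtain ⟨k, ha, hk⟩ := mem_pathEdges_iff_getElem?.1 ha
  obtain ⟨l, hb, hl⟩ := mem_pathEdges_iff_getElem?.1 hb
  obtain rfl : k = l := by
    have := (List.getElem?_inj (List.getElem?_eq_some_iff.1 hk).1 hp).1 (hk.trans hl.symm)
    omega
  exact Option.some_inj.1 (ha.symm.trans hb)

section idxOf
variable [DecidableEq V] {p : List V} {a : V}

theorem List.Nodup.idxOf_eq_of_getElem? (hp : p.Nodup) {k : ℕ} (h : p[k]? = some a) :
    p.idxOf a = k := by
  obtain ⟨hk, rfl⟩ := List.getElem?_eq_some_iff.1 h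
  exact hp.idxOf_getElem k hk

theorem List.Nodup.idxOf_eq_zero_of_head? (hp : p.Nodup) (h : p.head? = some a) :
    p.idxOf a = 0 :=
  hp.idxOf_eq_of_getElem? (List.head?_eq_getElem? ▸ h)

theorem List.Nodup.idxOf_eq_of_getLast? (hp : p.Nodup) (h : p.getLast? = some a) :
    p.idxOf a = p.length - 1 :=
  hp.idxOf_eq_of_getElem? (List.getLast?_eq_getElem? ▸ h)

theorem List.Nodup.idxOf_snd_of_mem_pathEdges (hp : p.Nodup) {b : V}
    (h : (a, b) ∈ pathEdges p) : p.idxOf b = p.idxOf a + 1 ∧ p.idxOf b < p.length := by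
  obtain ⟨k, ha, hb⟩ := mem_pathEdges_iff_getElem?.1 h
  rw [hp.idxOf_eq_of_getElem? ha, hp.idxOf_eq_of_getElem? hb]
  exact ⟨rfl, (List.getElem?_eq_some_iff.1 hb).1⟩

theorem List.Nodup.le_idxOf_of_mem_drop (hp : p.Nodup) {k : ℕ} (h : a ∈ p.drop k) :
    k ≤ p.idxOf a := by
  obtain ⟨n, hn⟩ := List.mem_iff_getElem?.1 h
  rw [List.getElem?_drop] at hn
  rw [hp.idxOf_eq_of_getElem? hn]
  omega

theorem List.Nodup.idxOf_le_or_idxOf_le_of_mem_pathEdges (hp : p.Nodup) {f g : V × V}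
    (hf : f ∈ pathEdges p) (hg : g ∈ pathEdges p) (hfg : f ≠ g) :
    p.idxOf f.2 ≤ p.idxOf g.1 ∨ p.idxOf g.2 ≤ p.idxOf f.1 := by
  obtain ⟨a, b⟩ := f
  obtain ⟨a', b'⟩ := g
  have hb := hp.idxOf_snd_of_mem_pathEdges hf
  have hb' := hp.idxOf_snd_of_mem_pathEdges hg
  have hbb' : p.idxOf b ≠ p.idxOf b' := fun h => by
    obtain rfl := (List.idxOf_inj (mem_of_mem_pathEdges hf).2).1 h
    exact hfg (by rw [hp.fst_eq_of_mem_pathEdges hf hg])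
  dsimp only
  omega

theorem List.getLast?_take_idxOf_succ (h : a ∈ p) :
    (p.take (p.idxOf a + 1)).getLast? = some a := by
  simp [List.getLast?_take, List.getElem?_idxOf h]

theorem List.head?_drop_idxOf (h : a ∈ p) : (p.drop (p.idxOf a)).head? = some a := by
  simp [List.head?_drop, List.getElem?_idxOf h]

theorem List.getLast?_drop_idxOf (h : a ∈ p) : (p.drop (p.idxOf a)).getLast? = p.getLast? := by
  simp [List.getLast?_drop, List.idxOf_lt_length_of_mem h]

end idxOf

section pathCost
variable {E : Set (V × V)} {cost : V × V → ℝ}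

theorem pathCost_cons_cons (cost : V × V → ℝ) (a b : V) (l : List V) :
    pathCost cost (a :: b :: l) = cost (a, b) + pathCost cost (b :: l) := by
  simp [pathCost, pathEdges]

theorem pathCost_append_cons (cost : V × V → ℝ) (l m : List V) (z : V) :
    pathCost cost (l ++ z :: m) = pathCost cost (l ++ [z]) + pathCost cost (z :: m) := by
  induction l with
  | nil => simp [pathCost, pathEdges]
  | cons a l ih =>
    cases l with
    | nil => simp [pathCost, pathEdges]
    | cons b l =>
      simp only [List.cons_append] at ih ⊢
      rw [pathCost_cons_cons, pathCost_cons_cons, ih]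
      ring

theorem pathCost_nonneg (hcost : ∀ ε ∈ E, 0 ≤ cost ε) {p : List V}
    (hp : p.IsChain (fun a b => (a, b) ∈ E)) : 0 ≤ pathCost cost p :=
  List.sum_nonneg fun _ hc => by
    obtain ⟨ε, hε, rfl⟩ := List.mem_map.1 hc
    exact hcost ε (isChain_iff_forall_mem_pathEdges.1 hp ε hε)

theorem isChain_splice {R : V → V → Prop} {s a b : List V} {x y : V}
    (hx : s.head? = some x) (hy : s.getLast? = some y) :
    (a ++ s ++ b).IsChain R ↔ (a ++ [x]).IsChain R ∧ s.IsChain R ∧ (y :: b).IsChain R := by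
  obtain ⟨s₁, hs₁⟩ := List.head?_eq_some_iff.1 hx
  obtain ⟨s₂, hs₂⟩ := List.getLast?_eq_some_iff.1 hy
  have h₁ : a ++ s ++ b = a ++ x :: (s₁ ++ b) := by simp [hs₁]
  have h₂ : x :: (s₁ ++ b) = s₂ ++ y :: b := by rw [← List.cons_append, ← hs₁, hs₂]; simp
  rw [h₁, List.isChain_split, h₂, List.isChain_split (l₁ := s₂), ← hs₂]

theorem pathCost_splice {s a b : List V} {x y : V} (hx : s.head? = some x)
    (hy : s.getLast? = some y) :
    pathCost cost (a ++ s ++ b) =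
      pathCost cost (a ++ [x]) + pathCost cost s + pathCost cost (y :: b) := by
  obtain ⟨s₁, hs₁⟩ := List.head?_eq_some_iff.1 hx
  obtain ⟨s₂, hs₂⟩ := List.getLast?_eq_some_iff.1 hy
  have h₁ : a ++ s ++ b = a ++ x :: (s₁ ++ b) := by simp [hs₁]
  have h₂ : x :: (s₁ ++ b) = s₂ ++ y :: b := by rw [← List.cons_append, ← hs₁, hs₂]; simp
  rw [h₁, pathCost_append_cons, h₂, pathCost_append_cons cost s₂, ← hs₂, add_assoc]

end pathCost

section Dipath
variable {E E' : Set (V × V)} {cost : V × V → ℝ} {u v x y : V} {p q s : List V}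

theorem IsDipath.mem_of_mem_pathEdges (hp : IsDipath E u v p) {ε : V × V}
    (hε : ε ∈ pathEdges p) : ε ∈ E :=
  isChain_iff_forall_mem_pathEdges.1 hp.2.2.2 ε hε

theorem IsDipath.mono (hp : IsDipath E u v p) (h : ∀ ε ∈ pathEdges p, ε ∈ E') :
    IsDipath E' u v p :=
  ⟨hp.1, hp.2.1, hp.2.2.1, isChain_iff_forall_mem_pathEdges.2 h⟩

theorem IsDipath.infix (hp : IsDipath E u v p) (hs : s <:+: p) (hx : s.head? = some x)
    (hy : s.getLast? = some y) : IsDipath E x y s :=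
  ⟨hp.1.sublist hs.sublist, hx, hy, hp.2.2.2.infix hs⟩

theorem IsDipath.exists_out_edge (hp : IsDipath E u v p) (huv : u ≠ v) :
    ∃ c, (u, c) ∈ pathEdges p := by
  obtain ⟨t, rfl⟩ := List.head?_eq_some_iff.1 hp.2.1
  obtain _ | ⟨c, t⟩ := t
  · exact absurd (by simpa using hp.2.2.1) huv
  · exact ⟨c, mem_pathEdges_iff_exists_append.2 ⟨[], t, rfl⟩⟩

theorem IsDipath.exists_in_edge (hp : IsDipath E u v p) (huv : u ≠ v) :
    ∃ d, (d, v) ∈ pathEdges p := by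
  obtain ⟨t, rfl⟩ := List.getLast?_eq_some_iff.1 hp.2.2.1
  obtain rfl | ⟨t, d, rfl⟩ := t.eq_nil_or_concat
  · exact absurd (by simpa using hp.2.1.symm) huv
  · exact ⟨d, mem_pathEdges_iff_exists_append.2 ⟨t, [], by simp⟩⟩

theorem exists_dipath_pathCost_le_of_isChain (hcost : ∀ ε ∈ E, 0 ≤ cost ε) :
    ∀ {u : V} {l : List V}, l.IsChain (fun a b => (a, b) ∈ E) → l.head? = some u →
      l.getLast? = some v → ∃ p, IsDipath E u v p ∧ pathCost cost p ≤ pathCost cost l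
  | _, [], _, hu, _ => by simp at hu
  | _, [a], _, hu, hv => by
    obtain rfl := Option.some_inj.1 hu
    obtain rfl := Option.some_inj.1 hv
    exact ⟨[a], ⟨List.nodup_singleton a, rfl, rfl, List.isChain_singleton a⟩, le_rfl⟩
  | _, a :: b :: l, hl, hu, hv => by
    obtain rfl := Option.some_inj.1 hu
    obtain ⟨hab, hl⟩ := List.isChain_cons_cons.1 hl
    obtain ⟨q, hq, hq_cost⟩ :=
      exists_dipath_pathCost_le_of_isChain hcost hl rfl (by simpa using hv)
    rw [pathCost_cons_cons]
    have := hcost _ hab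
    by_cases ha : a ∈ q
    · obtain ⟨q₁, q₂, rfl⟩ := List.append_of_mem ha
      have hsplit : q₁ ++ a :: q₂ = (q₁ ++ [a]) ++ q₂ := by simp
      refine ⟨a :: q₂, hq.infix (List.suffix_append _ _).isInfix rfl ?_, ?_⟩
      · simpa [List.getLast?_cons] using hq.2.2.1
      · have := pathCost_nonneg (cost := cost) hcost
          (hq.2.2.2.infix (hsplit ▸ (List.prefix_append (q₁ ++ [a]) q₂).isInfix))
        rw [pathCost_append_cons] at hq_cost
        linarith
    · obtain ⟨q', rfl⟩ := List.head?_eq_some_iff.1 hq.2.1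
      refine ⟨a :: b :: q', ⟨List.nodup_cons.2 ⟨ha, hq.1⟩, rfl, ?_, ?_⟩, ?_⟩
      · simpa [List.getLast?_cons] using hq.2.2.1
      · exact List.isChain_cons_cons.2 ⟨hab, hq.2.2.2⟩
      · rw [pathCost_cons_cons]
        linarith

theorem IsShortestDipath.infix (hcost : ∀ ε ∈ E, 0 ≤ cost ε)
    (hp : IsShortestDipath E cost u v p) (hs : s <:+: p) (hx : s.head? = some x)
    (hy : s.getLast? = some y) : IsShortestDipath E cost x y s := by
  refine ⟨hp.1.infix hs hx hy, fun q hq => ?_⟩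
  obtain ⟨a, b, rfl⟩ := hs
  obtain ⟨ha, -, hb⟩ := (isChain_splice hx hy).1 hp.1.2.2.2
  obtain ⟨w, hw, hw_cost⟩ := exists_dipath_pathCost_le_of_isChain hcost
    ((isChain_splice hq.2.1 hq.2.2.1).2 ⟨ha, hq.2.2.2, hb⟩)
    (by simpa [List.head?_append, hx, hq.2.1] using hp.1.2.1)
    (by simpa [List.getLast?_append, hy, hq.2.2.1] using hp.1.2.2.1)
  have := hp.2 w hw
  rw [pathCost_splice hx hy] at this
  rw [pathCost_splice hq.2.1 hq.2.2.1] at hw_cost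
  linarith

theorem IsShortestDipath.eq_of_isShortestDipath
    (huniq : ∀ p q, IsShortestDipath E cost u v p → IsShortestDipath E cost u v q → p = q)
    (hp : IsShortestDipath E cost u v p) (hq : IsShortestDipath E' cost u v q)
    (hpE' : ∀ ε ∈ pathEdges p, ε ∈ E') (hqE : ∀ ε ∈ pathEdges q, ε ∈ E) : p = q := by
  have hqp := hq.2 p (hp.1.mono hpE')
  exact huniq p q hp ⟨hq.1.mono hqE, fun r hr => hqp.trans (hp.2 r hr)⟩

theorem exists_isShortestDipath [Finite V] (h : ∃ p, IsDipath E u v p) :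
    ∃ p, IsShortestDipath E cost u v p := by
  have : Fintype V := Fintype.ofFinite V
  have hfin : {p : List V | IsDipath E u v p}.Finite :=
    (List.finite_length_le V (Fintype.card V)).subset fun p hp => hp.1.length_le_card
  obtain ⟨p, hp, hmin⟩ := Set.exists_min_image _ (pathCost cost) hfin h
  exact ⟨p, hp, hmin⟩

theorem IsShortestDipathFromSet.exists_isShortestDipath {X : Set V}
    (hp : IsShortestDipathFromSet E cost X v p) : ∃ u, IsShortestDipath E cost u v p :=
  let ⟨⟨u, hu, hp'⟩, hmin⟩ := hp
  ⟨u, hp', hmin u hu⟩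

end Dipath

section Precedes
variable [DecidableEq V] {E : Set (V × V)} {cost : V × V → ℝ} {x y a b a' b' : V}
  {σ P : List V}

theorem out_edge_mem_pathEdges_of_precedes (hcost : ∀ ε ∈ E, 0 ≤ cost ε)
    (huniq : ∀ u v p q, IsShortestDipath (E \ {(a', b')}) cost u v p →
      IsShortestDipath (E \ {(a', b')}) cost u v q → p = q)
    (hσ : IsShortestDipath (E \ {(a', b')}) cost x y σ) (hP : IsShortestDipath E cost x y P)
    (habσ : (a, b) ∈ pathEdges σ) (habP : (a, b) ∈ pathEdges P)
    (hab'P : (a', b') ∈ pathEdges P) (hpre : P.idxOf b ≤ P.idxOf a')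
    {c : V} (hc : (x, c) ∈ pathEdges σ) : (x, c) ∈ pathEdges P := by
  have hbσ := (mem_of_mem_pathEdges habσ).2
  have hbP := (mem_of_mem_pathEdges habP).2
  have hs := hσ.infix (fun ε hε => hcost ε hε.1) (List.take_prefix (σ.idxOf b + 1) σ).isInfix
    (by simpa [List.head?_take] using hσ.1.2.1) (List.getLast?_take_idxOf_succ hbσ)
  have ht := hP.infix hcost (List.take_prefix (P.idxOf b + 1) P).isInfix
    (by simpa [List.head?_take] using hP.1.2.1) (List.getLast?_take_idxOf_succ hbP)
  have hb'P := (hP.1.1.idxOf_snd_of_mem_pathEdges hab'P).1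
  have hst := hs.eq_of_isShortestDipath (huniq _ _) ht
    (fun ε hε => (hs.1.mem_of_mem_pathEdges hε).1) fun ε hε => by
      refine ⟨ht.1.mem_of_mem_pathEdges hε, ?_⟩
      rintro rfl
      have := (List.mem_take_iff_idxOf_lt (mem_of_mem_pathEdges hab'P).2).1
        (mem_of_mem_pathEdges hε).2
      omega
  have hxb : x ≠ b := by
    rintro rfl
    have := hP.1.1.idxOf_eq_zero_of_head? hP.1.2.1
    have := (hP.1.1.idxOf_snd_of_mem_pathEdges habP).1
    omega
  obtain ⟨c', hc'⟩ := hs.1.exists_out_edge hxb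
  obtain rfl := hσ.1.1.snd_eq_of_mem_pathEdges
    ((List.take_prefix _ _).isInfix.pathEdges_subset hc') hc
  exact (List.take_prefix _ _).isInfix.pathEdges_subset (hst ▸ hc')

theorem in_edge_mem_pathEdges_of_precedes (hcost : ∀ ε ∈ E, 0 ≤ cost ε)
    (huniq : ∀ u v p q, IsShortestDipath (E \ {(a, b)}) cost u v p →
      IsShortestDipath (E \ {(a, b)}) cost u v q → p = q)
    (hσ : IsShortestDipath (E \ {(a, b)}) cost x y σ) (hP : IsShortestDipath E cost x y P)
    (habP : (a, b) ∈ pathEdges P) (hab'σ : (a', b') ∈ pathEdges σ)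
    (hab'P : (a', b') ∈ pathEdges P) (hpre : P.idxOf b ≤ P.idxOf a')
    {d : V} (hd : (d, y) ∈ pathEdges σ) : (d, y) ∈ pathEdges P := by
  have ha'σ := (mem_of_mem_pathEdges hab'σ).1
  have ha'P := (mem_of_mem_pathEdges hab'P).1
  have hs := hσ.infix (fun ε hε => hcost ε hε.1) (List.drop_suffix (σ.idxOf a') σ).isInfix
    (List.head?_drop_idxOf ha'σ) ((List.getLast?_drop_idxOf ha'σ).trans hσ.1.2.2.1)
  have ht := hP.infix hcost (List.drop_suffix (P.idxOf a') P).isInfix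
    (List.head?_drop_idxOf ha'P) ((List.getLast?_drop_idxOf ha'P).trans hP.1.2.2.1)
  have hbP := (hP.1.1.idxOf_snd_of_mem_pathEdges habP).1
  have hst := hs.eq_of_isShortestDipath (huniq _ _) ht
    (fun ε hε => (hs.1.mem_of_mem_pathEdges hε).1) fun ε hε => by
      refine ⟨ht.1.mem_of_mem_pathEdges hε, ?_⟩
      rintro rfl
      have := hP.1.1.le_idxOf_of_mem_drop (mem_of_mem_pathEdges hε).1
      omega
  have ha'y : a' ≠ y := by
    rintro rfl
    have := hP.1.1.idxOf_eq_of_getLast? hP.1.2.2.1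
    have := hP.1.1.idxOf_snd_of_mem_pathEdges hab'P
    omega
  obtain ⟨d', hd'⟩ := hs.1.exists_in_edge ha'y
  obtain rfl := hσ.1.1.fst_eq_of_mem_pathEdges
    ((List.drop_suffix _ _).isInfix.pathEdges_subset hd') hd
  exact (List.drop_suffix _ _).isInfix.pathEdges_subset (hst ▸ hd')

end Precedes

theorem Set.ncard_le_three_of_subsingleton_diff {α : Type*} [Finite α] {S F L : Set α}
    (hF : F.Subsingleton) (hL : L.Subsingleton) (hS : (S \ (F ∪ L)).Subsingleton) :
    S.ncard ≤ 3 := by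
  have hF := Set.ncard_le_one_iff_subsingleton.2 hF
  have hL := Set.ncard_le_one_iff_subsingleton.2 hL
  have hS := Set.ncard_le_one_iff_subsingleton.2 hS
  have hcover : S.ncard ≤ (F ∪ L ∪ S \ (F ∪ L)).ncard :=
    Set.ncard_le_ncard (Set.subset_union_right.trans Set.union_sdiff_self.superset)
  have := Set.ncard_union_le (F ∪ L) (S \ (F ∪ L))
  have := Set.ncard_union_le F L
  omega

section Charging
variable {m : ℕ} {ρ : Fin m → List V} {E : Set (V × V)} {cost : V × V → ℝ} {x y : V}
  {i j : Fin m} {f g : V × V} {σ τ P : List V}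

theorem HasColor.unique {ε : V × V} (hi : HasColor ρ i ε) (hj : HasColor ρ j ε) : i = j := by
  by_contra h
  rcases lt_or_gt_of_ne h with h | h
  · exact hj.2 i h hi.1
  · exact hi.2 j h hj.1

theorem subsingleton_hasColor_out_edge (hP : P.Nodup) :
    {i | ∃ c, (x, c) ∈ pathEdges P ∧ HasColor ρ i (x, c)}.Subsingleton := by
  rintro i ⟨c, hc, hi⟩ j ⟨c', hc', hj⟩
  obtain rfl := hP.snd_eq_of_mem_pathEdges hc hc'
  exact hi.unique hj

theorem subsingleton_hasColor_in_edge (hP : P.Nodup) :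
    {i | ∃ d, (d, y) ∈ pathEdges P ∧ HasColor ρ i (d, y)}.Subsingleton := by
  rintro i ⟨d, hd, hi⟩ j ⟨d', hd', hj⟩
  obtain rfl := hP.fst_eq_of_mem_pathEdges hd hd'
  exact hi.unique hj

def IsChargingSubpath (E : Set (V × V)) (cost : V × V → ℝ) (ρ : Fin m → List V) (i : Fin m)
    (x y : V) (σ : List V) : Prop :=
  IsShortestDipath E cost x y σ ∧ (∃ c, (x, c) ∈ pathEdges σ ∧ HasColor ρ i (x, c)) ∧
    ∃ d, (d, y) ∈ pathEdges σ ∧ HasColor ρ i (d, y)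

theorem Charged.exists_isChargingSubpath (hcost : ∀ ε ∈ E, 0 ≤ cost ε) {u v : V}
    (hρ : IsShortestDipath E cost u v (ρ i)) (hxy : x ≠ y) (hc : Charged ρ i x y) :
    ∃ σ, IsChargingSubpath E cost ρ i x y σ := by
  obtain ⟨⟨k, l, hkl, hk, hl⟩, ⟨a, ha⟩, ⟨b, hb⟩⟩ := hc
  have hσ : ((ρ i).drop k).take (l - k + 1) <:+: ρ i :=
    (List.take_prefix _ _).isInfix.trans (List.drop_suffix _ _).isInfix
  have hσ' := hρ.infix (x := x) (y := y) hcost hσ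
    (by simpa [List.head?_take, List.head?_drop] using hk)
    (by simp [List.getLast?_take, show k + (l - k) = l by omega, hl])
  obtain ⟨c, hc⟩ := hσ'.1.exists_out_edge hxy
  obtain ⟨d, hd⟩ := hσ'.1.exists_in_edge hxy
  obtain rfl := hρ.1.1.snd_eq_of_mem_pathEdges (hσ.pathEdges_subset hc) ha.1
  obtain rfl := hρ.1.1.fst_eq_of_mem_pathEdges (hσ.pathEdges_subset hd) hb.1
  exact ⟨_, hσ', ⟨c, hc, ha⟩, ⟨d, hd, hb⟩⟩

theorem IsChargingSubpath.hasColor_out_edge_of_not_mem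
    (huniq : ∀ p q, IsShortestDipath (E \ {f}) cost x y p →
      IsShortestDipath (E \ {f}) cost x y q → p = q)
    (hσ : IsChargingSubpath (E \ {f}) cost ρ i x y σ) (hP : IsShortestDipath E cost x y P)
    (hf : f ∉ pathEdges P) : ∃ c, (x, c) ∈ pathEdges P ∧ HasColor ρ i (x, c) := by
  obtain rfl := hσ.1.eq_of_isShortestDipath huniq hP
    (fun ε hε => (hσ.1.1.mem_of_mem_pathEdges hε).1)
    fun ε hε => ⟨hP.1.mem_of_mem_pathEdges hε, by rintro rfl; exact hf hε⟩
  exact hσ.2.1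

theorem IsChargingSubpath.mem_or_mem
    (huniq : ∀ p q, IsShortestDipath (E \ {f}) cost x y p →
      IsShortestDipath (E \ {f}) cost x y q → p = q)
    (hσ : IsChargingSubpath (E \ {f}) cost ρ i x y σ)
    (hτ : IsChargingSubpath (E \ {g}) cost ρ j x y τ) (hij : i ≠ j) :
    f ∈ pathEdges τ ∨ g ∈ pathEdges σ := by
  by_contra! h
  obtain rfl := hσ.1.eq_of_isShortestDipath huniq hτ.1
    (fun ε hε => ⟨(hσ.1.1.mem_of_mem_pathEdges hε).1, by rintro rfl; exact h.2 hε⟩)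
    fun ε hε => ⟨(hτ.1.1.mem_of_mem_pathEdges hε).1, by rintro rfl; exact h.1 hε⟩
  obtain ⟨c, hc, hci⟩ := hσ.2.1
  obtain ⟨c', hc', hcj⟩ := hτ.2.1
  obtain rfl := hσ.1.1.1.snd_eq_of_mem_pathEdges hc hc'
  exact hij (hci.unique hcj)

theorem IsChargingSubpath.hasColor_of_precedes [DecidableEq V] (hcost : ∀ ε ∈ E, 0 ≤ cost ε)
    (huniqf : ∀ u v p q, IsShortestDipath (E \ {f}) cost u v p →
      IsShortestDipath (E \ {f}) cost u v q → p = q)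
    (huniqg : ∀ u v p q, IsShortestDipath (E \ {g}) cost u v p →
      IsShortestDipath (E \ {g}) cost u v q → p = q)
    (hσ : IsChargingSubpath (E \ {f}) cost ρ i x y σ)
    (hτ : IsChargingSubpath (E \ {g}) cost ρ j x y τ) (hij : i ≠ j)
    (hP : IsShortestDipath E cost x y P) (hfP : f ∈ pathEdges P) (hgP : g ∈ pathEdges P)
    (hpre : P.idxOf f.2 ≤ P.idxOf g.1) :
    (∃ d, (d, y) ∈ pathEdges P ∧ HasColor ρ i (d, y)) ∨
      ∃ c, (x, c) ∈ pathEdges P ∧ HasColor ρ j (x, c) := by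
  obtain ⟨a, b⟩ := f
  obtain ⟨a', b'⟩ := g
  rcases hσ.mem_or_mem (huniqf x y) hτ hij with hfτ | hgσ
  · obtain ⟨c, hc, hcj⟩ := hτ.2.1
    exact .inr ⟨c, out_edge_mem_pathEdges_of_precedes hcost huniqg hτ.1 hP hfτ hfP hgP hpre hc,
      hcj⟩
  · obtain ⟨d, hd, hdi⟩ := hσ.2.2
    exact .inl ⟨d, in_edge_mem_pathEdges_of_precedes hcost huniqf hσ.1 hP hfP hgσ hgP hpre hd,
      hdi⟩

theorem ncard_charged_le_three [Finite V] (hcost : ∀ ε ∈ E, 0 ≤ cost ε)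
    {e : Fin m → V × V} (he : Function.Injective e)
    (huniq : ∀ i u v p q, IsShortestDipath (E \ {e i}) cost u v p →
      IsShortestDipath (E \ {e i}) cost u v q → p = q)
    (hρ : ∀ i, ∃ u v, IsShortestDipath (E \ {e i}) cost u v (ρ i)) (hxy : x ≠ y) :
    {i | Charged ρ i x y}.ncard ≤ 3 := by
  classical
  have hsub : ∀ i, Charged ρ i x y → ∃ σ, IsChargingSubpath (E \ {e i}) cost ρ i x y σ :=
    fun i hi => let ⟨_, _, h⟩ := hρ i
      hi.exists_isChargingSubpath (fun ε hε => hcost ε hε.1) h hxy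
  rcases Set.eq_empty_or_nonempty {i | Charged ρ i x y} with h | ⟨i₀, hi₀⟩
  · simp [h]
  obtain ⟨σ₀, hσ₀⟩ := hsub i₀ hi₀
  obtain ⟨P, hP⟩ := exists_isShortestDipath (cost := cost)
    ⟨σ₀, hσ₀.1.1.mono fun ε hε => (hσ₀.1.1.mem_of_mem_pathEdges hε).1⟩
  refine Set.ncard_le_three_of_subsingleton_diff
    (subsingleton_hasColor_out_edge (ρ := ρ) (x := x) hP.1.1)
    (subsingleton_hasColor_in_edge (ρ := ρ) (y := y) hP.1.1) ?_
  rintro i ⟨hi, hiFL⟩ j ⟨hj, hjFL⟩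
  simp only [Set.mem_union, not_or] at hiFL hjFL
  by_contra hij
  obtain ⟨σ, hσ⟩ := hsub i hi
  obtain ⟨τ, hτ⟩ := hsub j hj
  have hiP : e i ∈ pathEdges P :=
    by_contra fun h => hiFL.1 (hσ.hasColor_out_edge_of_not_mem (huniq i x y) hP h)
  have hjP : e j ∈ pathEdges P :=
    by_contra fun h => hjFL.1 (hτ.hasColor_out_edge_of_not_mem (huniq j x y) hP h)
  rcases hP.1.1.idxOf_le_or_idxOf_le_of_mem_pathEdges hiP hjP (he.ne hij) with h | h
  · rcases hσ.hasColor_of_precedes hcost (huniq i) (huniq j) hτ hij hP hiP hjP h with h | h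
    exacts [hiFL.2 h, hjFL.1 h]
  · rcases hτ.hasColor_of_precedes hcost (huniq j) (huniq i) hσ (Ne.symm hij) hP hjP hiP h
      with h | h
    exacts [hjFL.2 h, hiFL.1 h]

end Charging

end

theorem stmt2_general {V : Type*} [Fintype V]
    (E : Set (V × V)) (r : V) (cost : V × V → ℝ)
    (hcost : ∀ e ∈ E, 0 ≤ cost e)
    (huniq : ∀ F ⊆ E, ∀ u v : V, ∀ p q : List V,
      IsShortestDipath (E \ F) cost u v p → IsShortestDipath (E \ F) cost u v q → p = q)
    (T : Set (V × V)) (hT : IsMinArborescence E cost r T)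
    -- the labeling `v₁, …, v_{n−1}` of the non-root vertices
    (vlab : Fin (Fintype.card V - 1) → V)
    (hvinj : Function.Injective vlab)
    -- `e i = (par i, vlab i)` is the edge of `T` entering `vlab i`
    (par : Fin (Fintype.card V - 1) → V)
    (hpar : ∀ i, (par i, vlab i) ∈ T)
    -- `ρ i` is the shortest path in `G − e i` from `X(v_i)` to `vlab i`
    (ρ : Fin (Fintype.card V - 1) → List V)
    (hρ : ∀ i, IsShortestDipathFromSet (E \ {(par i, vlab i)}) cost
      {u : V | Relation.ReflTransGen
        (fun a b => (a, b) ∈ T \ {(par i, vlab i)}) r u} (vlab i) (ρ i)) :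
    ∀ x y : V, x ≠ y → {i : Fin (Fintype.card V - 1) | Charged ρ i x y}.ncard ≤ 3 :=
  fun _ _ hxy => ncard_charged_le_three hcost (e := fun i => (par i, vlab i))
    (fun _ _ h => hvinj (congrArg Prod.snd h))
    (fun i => huniq _ (Set.singleton_subset_iff.2 (hT.1.1 (hpar i))))
    (fun i => let ⟨u, hu⟩ := (hρ i).exists_isShortestDipath; ⟨u, _, hu⟩) hxy

/-- in the setting of Algorithm 1, with `T` a min-cost arborescence,
`e i = (par i, vlab i)` the `T`-edge entering the `i`-th non-root vertex, and `ρ i` the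
shortest path in `G − e i` from the component `X(v_i)` of `r` in `T − e i` to `vlab i`,
every ordered pair `(x, y)` of distinct vertices is charged by at most three colors. -/
theorem stmt2 {V : Type*} [Fintype V] [DecidableEq V]
    (E : Set (V × V)) (r : V) (cost : V × V → ℝ)
    (hcost : ∀ e ∈ E, 0 ≤ cost e)
    (hroot : ∀ e ∈ E, e.2 ≠ r)
    (huniq : ∀ F ⊆ E, ∀ u v : V, ∀ p q : List V,
      IsShortestDipath (E \ F) cost u v p → IsShortestDipath (E \ F) cost u v q → p = q)
    (T : Set (V × V)) (hT : IsMinArborescence E cost r T)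
    -- the labeling `v₁, …, v_{n−1}` of the non-root vertices
    (vlab : Fin (Fintype.card V - 1) → V)
    (hvinj : Function.Injective vlab)
    (hvrange : Set.range vlab = {v : V | v ≠ r})
    -- `e i = (par i, vlab i)` is the edge of `T` entering `vlab i`
    (par : Fin (Fintype.card V - 1) → V)
    (hpar : ∀ i, (par i, vlab i) ∈ T)
    -- `ρ i` is the shortest path in `G − e i` from `X(v_i)` to `vlab i`
    (ρ : Fin (Fintype.card V - 1) → List V)
    (hρ : ∀ i, IsShortestDipathFromSet (E \ {(par i, vlab i)}) cost
      {u : V | Relation.ReflTransGen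
        (fun a b => (a, b) ∈ T \ {(par i, vlab i)}) r u} (vlab i) (ρ i)) :
    ∀ x y : V, x ≠ y → {i : Fin (Fintype.card V - 1) | Charged ρ i x y}.ncard ≤ 3 :=
  stmt2_general E r cost hcost huniq T hT vlab hvinj par hpar ρ hρ
end

section
/- Let x and y be vertices of G and let e_i and e_j be edges of G. Suppose q_i is the unique shortest path from x to y in G − e_i and q_j is the unique shortest path from x to y in G − e_j. If q_i ≠ q_j, then e_i lies on q_j or e_j lies on q_i. -/
/-!
If neither edge lies on the other's replacement path, then `qj` also avoids `ei` and `qi`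
also avoids `ej`. Each path is then admissible in the other's graph, so the two have the
same cost, and `qj` is a second shortest path in `G − ei`, contradicting uniqueness.
-/

section

variable {V : Type*}

theorem isChain_mem_iff_forall_mem_pathEdges (E : Set (V × V)) (p : List V) :
    p.IsChain (fun a b => (a, b) ∈ E) ↔ ∀ e ∈ pathEdges p, e ∈ E := by
  induction p using List.twoStepInduction with
  | nil | singleton => simp [pathEdges]
  | cons_cons a b t _ ih =>
    simp only [pathEdges, List.tail_cons, List.zip_cons_cons] at ih ⊢
    simp [List.isChain_cons_cons, ih]

theorem IsDipath.mono_s5 {E F : Set (V × V)} {u v : V} {p : List V} (hEF : E ⊆ F)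
    (hp : IsDipath E u v p) : IsDipath F u v p :=
  ⟨hp.1, hp.2.1, hp.2.2.1, hp.2.2.2.imp fun _ _ h => hEF h⟩

theorem IsDipath.diff_singleton {E : Set (V × V)} {u v : V} {p : List V} {e : V × V}
    (hp : IsDipath E u v p) (he : e ∉ pathEdges p) : IsDipath (E \ {e}) u v p := by
  have hpE := (isChain_mem_iff_forall_mem_pathEdges E p).1 hp.2.2.2
  refine ⟨hp.1, hp.2.1, hp.2.2.1, (isChain_mem_iff_forall_mem_pathEdges _ p).2 ?_⟩
  exact fun f hf => ⟨hpE f hf, fun hfe => he (Set.mem_singleton_iff.1 hfe ▸ hf)⟩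

theorem IsShortestDipath.of_pathCost_le {E : Set (V × V)} {cost : V × V → ℝ} {u v : V}
    {p q : List V} (hp : IsShortestDipath E cost u v p) (hq : IsDipath E u v q)
    (hqp : pathCost cost q ≤ pathCost cost p) : IsShortestDipath E cost u v q :=
  ⟨hq, fun r hr => hqp.trans (hp.2 r hr)⟩

end

theorem stmt5_general {V : Type*}
    (E : Set (V × V)) (cost : V × V → ℝ)
    (huniq : ∀ F ⊆ E, ∀ u v : V, ∀ p q : List V,
      IsShortestDipath (E \ F) cost u v p → IsShortestDipath (E \ F) cost u v q → p = q)
    (x y : V) (ei ej : V × V) (hei : ei ∈ E)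
    (qi qj : List V)
    (hqi : IsShortestDipath (E \ {ei}) cost x y qi)
    (hqj : IsShortestDipath (E \ {ej}) cost x y qj)
    (hne : qi ≠ qj) :
    ei ∈ pathEdges qj ∨ ej ∈ pathEdges qi := by
  by_contra! ⟨hij, hji⟩
  have hqj_avoids_ei : IsDipath (E \ {ei}) x y qj :=
    (hqj.1.mono_s5 Set.sdiff_subset).diff_singleton hij
  have hqi_avoids_ej : IsDipath (E \ {ej}) x y qi :=
    (hqi.1.mono_s5 Set.sdiff_subset).diff_singleton hji
  have hqj_shortest : IsShortestDipath (E \ {ei}) cost x y qj :=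
    hqi.of_pathCost_le hqj_avoids_ei (hqj.2 qi hqi_avoids_ej)
  exact hne (huniq {ei} (Set.singleton_subset_iff.2 hei) x y qi qj hqi hqj_shortest)

/-- if `qi` is the unique shortest path from `x` to `y` in `G − ei` and
`qj` is the unique shortest path from `x` to `y` in `G − ej`, and `qi ≠ qj`, then
`ei` lies on `qj` or `ej` lies on `qi`. -/
theorem stmt5 {V : Type*} [Fintype V] [DecidableEq V]
    (E : Set (V × V)) (cost : V × V → ℝ)
    (hcost : ∀ e ∈ E, 0 ≤ cost e)
    (huniq : ∀ F ⊆ E, ∀ u v : V, ∀ p q : List V,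
      IsShortestDipath (E \ F) cost u v p → IsShortestDipath (E \ F) cost u v q → p = q)
    (x y : V) (ei ej : V × V) (hei : ei ∈ E) (hej : ej ∈ E)
    (qi qj : List V)
    (hqi : IsShortestDipath (E \ {ei}) cost x y qi)
    (hqj : IsShortestDipath (E \ {ej}) cost x y qj)
    (hne : qi ≠ qj) :
    ei ∈ pathEdges qj ∨ ej ∈ pathEdges qi :=
  stmt5_general E cost huniq x y ei ej hei qi qj hqi hqj hne
end
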